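/- The curve w̃ in ℓ² defined by w̃(t) = (2√2/π) · Σ_{k=1}^∞ sin(π(k−1/2)t)/(2k−1) · e_k satisfies ⟨w̃(t) − w̃(s), w̃(u) − w̃(v)⟩₂ = 0 whenever 0 ≤ v ≤ u ≤ s ≤ t ≤ 1, i.e., increments over disjoint time intervals are orthogonal. -/

import Mathlib

/-!
The coordinates of `w̃` satisfy `⟨w̃ a, w̃ b⟩ = min a b` on `[0, 1]`, the covariance of Brownian
motion, and for `v ≤ u ≤ s ≤ t` the four covariances in the expanded inner product of increments
cancel. The covariance comes from the product-to-sum formula for `sin · sin` and the Fourier series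
`∑ cos ((2k+1) θ) / (2k+1)² = π²/8 - π|θ|/4` on `[-π, π]`, obtained from the Bernoulli-polynomial
series for `∑ cos (n θ) / n²` by removing the even terms.
-/

open Real

theorem Orthonormal.hasSum_inner_of_hasSum {𝕜 E ι : Type*} [RCLike 𝕜] [NormedAddCommGroup E]
    [InnerProductSpace 𝕜 E] {v : ι → E} (hv : Orthonormal 𝕜 v) {c d : ι → 𝕜} {x y : E}
    (hx : HasSum (fun i => c i • v i) x) (hy : HasSum (fun i => d i • v i) y) :
    HasSum (fun i => starRingEnd 𝕜 (c i) * d i) (inner 𝕜 x y) := by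
  classical
  have hcoord (i : ι) : inner 𝕜 (v i) x = c i := by
    refine ((innerSL 𝕜 (v i)).hasSum hx).unique ?_
    convert hasSum_ite_eq i (c i) using 2 with j
    rw [innerSL_apply_apply, inner_smul_right, orthonormal_iff_ite.mp hv]
    split_ifs <;> simp_all
  have h := (innerSL 𝕜 x).hasSum hy
  simp only [innerSL_apply_apply, inner_smul_right] at h
  convert h using 2 with i
  rw [← inner_conj_symm, hcoord, mul_comm]

theorem lp.orthonormal_single {𝕜 ι : Type*} [RCLike 𝕜] [DecidableEq ι] :
    Orthonormal 𝕜 (fun i : ι => lp.single 2 i (1 : 𝕜)) := by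
  rw [orthonormal_iff_ite]
  intro i j
  rw [lp.inner_single_left, lp.single_apply, Pi.single_apply]
  split_ifs <;> simp_all

theorem hasSum_cos_nat_mul_div_sq {θ : ℝ} (h0 : 0 ≤ θ) (h2π : θ ≤ 2 * π) :
    HasSum (fun n : ℕ => cos (n * θ) / (n : ℝ) ^ 2) (π ^ 2 / 6 - π * θ / 2 + θ ^ 2 / 4) := by
  have hx : θ / (2 * π) ∈ Set.Icc (0 : ℝ) 1 :=
    ⟨by positivity, (div_le_one (by positivity)).2 h2π⟩
  convert hasSum_one_div_nat_pow_mul_cos one_ne_zero hx using 1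
  · ext n
    rw [mul_comm (2 * π * n), ← mul_assoc, div_mul_cancel₀ _ (by positivity), mul_one, mul_comm θ]
    ring
  · norm_num [Polynomial.bernoulli, Finset.sum_range_succ, bernoulli_eq_bernoulli'_of_ne_one,
      bernoulli'_two]
    field_simp
    ring

theorem hasSum_cos_odd_mul_div_sq {θ : ℝ} (hθ : |θ| ≤ π) :
    HasSum (fun k : ℕ => cos ((2 * k + 1) * θ) / (2 * k + 1) ^ 2) (π ^ 2 / 8 - π * |θ| / 4) := by
  wlog h0 : 0 ≤ θ generalizing θ
  · simpa [mul_neg] using this (θ := -θ) (by rwa [abs_neg]) (by linarith)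
  rw [abs_of_nonneg h0] at hθ ⊢
  set f : ℕ → ℝ := fun n => cos (n * θ) / (n : ℝ) ^ 2
  have hall : HasSum f (π ^ 2 / 6 - π * θ / 2 + θ ^ 2 / 4) :=
    hasSum_cos_nat_mul_div_sq h0 (by linarith [pi_pos])
  have heven :
      HasSum (fun k => f (2 * k)) ((π ^ 2 / 6 - π * (2 * θ) / 2 + (2 * θ) ^ 2 / 4) / 4) := by
    have h2θ := hasSum_cos_nat_mul_div_sq (θ := 2 * θ) (by linarith) (by linarith)
    refine (h2θ.div_const 4).congr_fun fun k => ?_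
    simp only [f, Nat.cast_mul, Nat.cast_ofNat, mul_assoc, mul_left_comm (k : ℝ) 2]
    ring
  obtain ⟨S, hodd⟩ : Summable fun k => f (2 * k + 1) :=
    hall.summable.comp_injective fun a b h => by omega
  obtain rfl : S = π ^ 2 / 8 - π * θ / 4 := by
    have := hall.unique (heven.even_add_odd hodd)
    linarith
  simpa [f] using hodd

/-- Coordinates are indexed from `0`: `spiralCoeff k` is the paper's coefficient of `e_(k+1)`. -/
noncomputable def spiralCoeff (k : ℕ) (t : ℝ) : ℝ :=
  2 * √2 / π * (sin (π * ((k : ℝ) + 1 / 2) * t) / (2 * (k : ℝ) + 1))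

theorem spiralCoeff_mul_spiralCoeff (k : ℕ) (a b : ℝ) :
    spiralCoeff k a * spiralCoeff k b = 4 / π ^ 2 *
      (cos ((2 * k + 1) * (π * (a - b) / 2)) / (2 * k + 1) ^ 2 -
        cos ((2 * k + 1) * (π * (a + b) / 2)) / (2 * k + 1) ^ 2) := by
  have hsub : (2 * k + 1) * (π * (a - b) / 2) = π * (k + 1 / 2) * a - π * (k + 1 / 2) * b := by ring
  have hadd : (2 * k + 1) * (π * (a + b) / 2) = π * (k + 1 / 2) * a + π * (k + 1 / 2) * b := by ring
  rw [hsub, hadd, cos_sub, cos_add, spiralCoeff, spiralCoeff]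
  field_simp
  rw [sq_sqrt zero_le_two]
  ring

theorem hasSum_spiralCoeff_mul_spiralCoeff {a b : ℝ} (ha : a ∈ Set.Icc (0 : ℝ) 1)
    (hb : b ∈ Set.Icc (0 : ℝ) 1) :
    HasSum (fun k => spiralCoeff k a * spiralCoeff k b) (min a b) := by
  obtain ⟨ha0, ha1⟩ := ha
  obtain ⟨hb0, hb1⟩ := hb
  have habs_sub : |π * (a - b) / 2| = π * |a - b| / 2 := by
    rw [abs_div, abs_mul, abs_of_pos pi_pos, abs_two]
  have habs_add : |π * (a + b) / 2| = π * (a + b) / 2 := abs_of_nonneg (by positivity)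
  have h := ((hasSum_cos_odd_mul_div_sq (θ := π * (a - b) / 2) ?_).sub
    (hasSum_cos_odd_mul_div_sq (θ := π * (a + b) / 2) ?_)).mul_left (4 / π ^ 2)
  · have hmin : 4 / π ^ 2 * ((π ^ 2 / 8 - π * |π * (a - b) / 2| / 4) -
        (π ^ 2 / 8 - π * |π * (a + b) / 2| / 4)) = min a b := by
      rw [habs_sub, habs_add]
      rcases le_total a b with hab | hab
      · rw [min_eq_left hab, abs_of_nonpos (sub_nonpos.2 hab)]
        field_simp
        ring
      · rw [min_eq_right hab, abs_of_nonneg (sub_nonneg.2 hab)]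
        field_simp
        ring
    rw [hmin] at h
    exact h.congr_fun fun k => spiralCoeff_mul_spiralCoeff k a b
  · have hab : |a - b| ≤ 1 := abs_sub_le_iff.2 ⟨by linarith, by linarith⟩
    rw [habs_sub]
    nlinarith [pi_pos]
  · rw [habs_add]
    nlinarith [pi_pos]

theorem inner_eq_min_of_hasSum_spiralCoeff {x y : lp (fun _ : ℕ => ℝ) 2} {a b : ℝ}
    (ha : a ∈ Set.Icc (0 : ℝ) 1) (hb : b ∈ Set.Icc (0 : ℝ) 1)
    (hx : HasSum (fun k => spiralCoeff k a • lp.single 2 k (1 : ℝ)) x)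
    (hy : HasSum (fun k => spiralCoeff k b • lp.single 2 k (1 : ℝ)) y) :
    inner ℝ x y = min a b :=
  (lp.orthonormal_single.hasSum_inner_of_hasSum hx hy).unique
    (by simpa using hasSum_spiralCoeff_mul_spiralCoeff ha hb)

/-- Increments of the Wiener spiral over disjoint time intervals are orthogonal. -/
theorem stmt_2 (w : ℝ → lp (fun _ : ℕ => ℝ) 2)
    (hw : ∀ t ∈ Set.Icc (0:ℝ) 1,
      HasSum (fun k : ℕ =>
        ((2 * Real.sqrt 2 / Real.pi) *
          (Real.sin (Real.pi * ((k : ℝ) + 1/2) * t) / (2 * (k : ℝ) + 1)))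
            • lp.single 2 k (1:ℝ)) (w t)) :
    ∀ v u s t : ℝ, 0 ≤ v → v ≤ u → u ≤ s → s ≤ t → t ≤ 1 →
      (inner ℝ (w t - w s) (w u - w v) : ℝ) = 0 := by
  intro v u s t hv hvu hus hst ht1
  have hcov {a b : ℝ} (ha : a ∈ Set.Icc (0 : ℝ) 1) (hb : b ∈ Set.Icc (0 : ℝ) 1) :
      inner ℝ (w a) (w b) = min a b :=
    inner_eq_min_of_hasSum_spiralCoeff ha hb (hw a ha) (hw b hb)
  have hvI : v ∈ Set.Icc (0 : ℝ) 1 := ⟨hv, by linarith⟩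
  have huI : u ∈ Set.Icc (0 : ℝ) 1 := ⟨by linarith, by linarith⟩
  have hsI : s ∈ Set.Icc (0 : ℝ) 1 := ⟨by linarith, by linarith⟩
  have htI : t ∈ Set.Icc (0 : ℝ) 1 := ⟨by linarith, ht1⟩
  rw [inner_sub_left, inner_sub_right, inner_sub_right, hcov htI huI, hcov htI hvI, hcov hsI huI,
    hcov hsI hvI, min_eq_right (by linarith), min_eq_right (by linarith),
    min_eq_right (by linarith), min_eq_right (by linarith)]
  ring
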